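/- Let n ≥ 4 be an even integer. On the open set {(z, t) ∈ ℂ^n × ℂ^{n+2} : z_1⋯z_n ≠ 1} with coordinates z_1,…,z_n, t_0,…,t_{n+1}, define W_0 = e^{t_1} z_1^2 z_n/(z_1⋯z_n − 1) + z_2 + Σ_{i=2}^{n−1} z_i z_{i+1} and W = t_0 + W_0 + Σ_{i=2}^{n} t_i W_0^i − 2 e^{t_1} t_n + t_{n+1} e^{t_1} z_1. Then the first-order differential operator Ẽ = n ∂_{t_1} + Σ_{i=0}^{n} (1−i) t_i ∂_{t_i} + (1 − n/2) t_{n+1} ∂_{t_{n+1}} − (n/2) z_1 ∂_{z_1} + Σ_{i=1}^{n/2} z_{2i} ∂_{z_{2i}} satisfies Ẽ(W) = W identically. -/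

import Mathlib

open Finset

/-- The mirror LG potential of the quadric with `q = e^{t₁}`:
`W₀ = e^{t₁} z₁² z_n/(z₁⋯z_n − 1) + z₂ + ∑_{i=2}^{n−1} z_i z_{i+1}`. -/
noncomputable def W0t (n : ℕ) (z t : ℕ → ℂ) : ℂ :=
  Complex.exp (t 1) * (z 1) ^ 2 * z n / ((∏ i ∈ Finset.Icc 1 n, z i) - 1)
    + z 2 + ∑ i ∈ Finset.Icc 2 (n - 1), z i * z (i + 1)

/-- The universal unfolding
`W = t₀ + W₀ + ∑_{i=2}^{n} t_i W₀^i − 2 e^{t₁} t_n + t_{n+1} e^{t₁} z₁`. -/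
noncomputable def Wunf (n : ℕ) (z t : ℕ → ℂ) : ℂ :=
  t 0 + W0t n z t + (∑ i ∈ Finset.Icc 2 n, t i * (W0t n z t) ^ i)
    - 2 * Complex.exp (t 1) * t n + t (n + 1) * Complex.exp (t 1) * z 1

/-!
`W` is quasi-homogeneous of degree one: under the flow of `Ẽ`, which multiplies `z_k` and `t_k`
by `e^{w s}` for their weights `w` and moves `t₁` to `t₁ + n s`, it gets multiplied by `e^s`.
The weights of `z₁, …, z_n` add up to `-n/2 + n/2 = 0`, so `z₁⋯z_n` is invariant, and every other
monomial has weight one. Differentiating at `s = 0` gives `Ẽ(W) = W` by the chain rule, applied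
to the restriction of `W` to the finitely many coordinates it depends on.
-/

open Function

theorem fderiv_apply_eq_sum_deriv_update {𝕜 ι F : Type*} [NontriviallyNormedField 𝕜]
    [Fintype ι] [DecidableEq ι] [NormedAddCommGroup F] [NormedSpace 𝕜 F]
    {f : (ι → 𝕜) → F} {x : ι → 𝕜} (hf : DifferentiableAt 𝕜 f x) (v : ι → 𝕜) :
    fderiv 𝕜 f x v = ∑ i, v i • deriv (fun s => f (update x i s)) (x i) := by
  have hpartial (i : ι) :
      deriv (fun s => f (update x i s)) (x i) = fderiv 𝕜 f x (Pi.single i 1) := by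
    have hf' : HasFDerivAt f (fderiv 𝕜 f x) (update x i (x i)) := by
      rw [update_eq_self]; exact hf.hasFDerivAt
    exact (hf'.comp_hasDerivAt (x i) (hasDerivAt_update x i (x i))).deriv
  simp only [hpartial, ← map_smul, ← map_sum]
  congr 1
  ext j
  simp [Pi.single_apply]

@[fun_prop]
theorem DifferentiableAt.fun_finsetProd' {𝕜 E 𝔸 ι : Type*} [NontriviallyNormedField 𝕜]
    [NormedAddCommGroup E] [NormedSpace 𝕜 E] [NormedCommRing 𝔸] [NormedAlgebra 𝕜 𝔸]
    {u : Finset ι} {g : ι → E → 𝔸} {x : E} (hg : ∀ i ∈ u, DifferentiableAt 𝕜 (g i) x) :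
    DifferentiableAt 𝕜 (fun y => ∏ i ∈ u, g i y) x := by
  classical
  exact (HasFDerivAt.finsetProd fun i hi => (hg i hi).hasFDerivAt).differentiableAt

section ExtendVal

variable {ι α : Type*} [DecidableEq ι] (S : Finset ι)

theorem extend_val_restrict {x y : ι → α} (hy : ∀ i ∉ S, y i = x i) :
    extend Subtype.val (fun i : S => y i) x = y := by
  ext i
  by_cases hi : i ∈ S
  · exact Subtype.val_injective.extend_apply _ x ⟨i, hi⟩
  · rw [extend_apply' _ _ _ (by simpa using hi), hy i hi]

theorem extend_val_update_restrict (x : ι → α) (i : S) (a : α) :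
    extend Subtype.val (update (fun j : S => x j) i a) x = update x i a := by
  rw [← extend_val_restrict S (y := update x i a) fun j hj => update_of_ne (by grind) a x]
  congr 1
  exact (update_comp_eq_of_injective x Subtype.val_injective i a).symm

variable {𝕜 : Type*} [NontriviallyNormedField 𝕜]

@[fun_prop]
theorem differentiable_extend_val_apply (x : ι → 𝕜) (i : ι) :
    Differentiable 𝕜 (fun u : S → 𝕜 => extend Subtype.val u x i) := by
  by_cases hi : i ∈ S
  · have h : (fun u : S → 𝕜 => extend Subtype.val u x i) = fun u => u ⟨i, hi⟩ :=
      funext fun u => Subtype.val_injective.extend_apply u x ⟨i, hi⟩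
    rw [h]; fun_prop
  · have h : (fun u : S → 𝕜 => extend Subtype.val u x i) = fun _ => x i :=
      funext fun u => extend_apply' _ _ _ (by simpa using hi)
    rw [h]; fun_prop

@[fun_prop]
theorem differentiableAt_extend_val_apply (x : ι → 𝕜) (i : ι) (u : S → 𝕜) :
    DifferentiableAt 𝕜 (fun u : S → 𝕜 => extend Subtype.val u x i) u :=
  (differentiable_extend_val_apply S x i).differentiableAt

end ExtendVal

/-- Differentiate `F (γ s) = e^s F x` at `s = 0`; the chain rule runs on the coordinates in `S`,
the only ones `γ` moves. -/
theorem sum_mul_deriv_update_eq_self_of_flow {ι : Type*} [DecidableEq ι] (S : Finset ι)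
    {F : (ι → ℂ) → ℂ} {x v : ι → ℂ} {γ : ℂ → ι → ℂ}
    (hF : DifferentiableAt ℂ (fun u : S → ℂ => F (extend Subtype.val u x)) (fun i => x i))
    (hγ : ∀ i ∈ S, HasDerivAt (fun s => γ s i) (v i) 0) (hγ0 : γ 0 = x)
    (hγS : ∀ s, ∀ i ∉ S, γ s i = x i) (hom : ∀ s, F (γ s) = Complex.exp s * F x) :
    ∑ i ∈ S, v i * deriv (fun a => F (update x i a)) (x i) = F x := by
  set G := fun u : S → ℂ => F (extend Subtype.val u x)
  have hcurve : HasDerivAt (fun s (i : S) => γ s i) (fun i => v i) 0 :=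
    hasDerivAt_pi.mpr fun i => hγ i i.2
  have hG : HasFDerivAt G (fderiv ℂ G fun i => x i) ((fun s (i : S) => γ s i) 0) := by
    simpa [hγ0] using hF.hasFDerivAt
  have hexp : HasDerivAt (fun s => G fun i => γ s i) (F x) 0 := by
    have h := (Complex.hasDerivAt_exp 0).mul_const (F x)
    simp only [Complex.exp_zero, one_mul] at h
    refine h.congr_of_eventuallyEq (Filter.Eventually.of_forall fun s => ?_)
    simp only [G, extend_val_restrict S (hγS s), hom]
  have hchain := hG.comp_hasDerivAt (0 : ℂ) hcurve
  rw [hexp.unique hchain, fderiv_apply_eq_sum_deriv_update hF, ← sum_coe_sort S]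
  refine sum_congr rfl fun i _ => ?_
  simp only [G, extend_val_update_restrict, smul_eq_mul]

open Complex

/- `Ẽ = ∑ zWeight k • z_k ∂_{z_k} + ∑ (tWeight k • t_k + n δ_{k1}) ∂_{t_k}`, and `zFlow`, `tFlow`
are its flow. The weights vanish off `z₁, …, z_n` and `t₀, …, t_{n+1}`, so the flow fixes every
other coordinate. -/
noncomputable def zWeight (n k : ℕ) : ℂ :=
  if k ∈ Icc 1 n then (if Even k then 1 else 0) - (if k = 1 then (n : ℂ) / 2 else 0) else 0

noncomputable def tWeight (n k : ℕ) : ℂ :=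
  if k ≤ n then 1 - k else if k = n + 1 then 1 - (n : ℂ) / 2 else 0

noncomputable def zFlow (n : ℕ) (s : ℂ) (z : ℕ → ℂ) (k : ℕ) : ℂ := exp (zWeight n k * s) * z k

noncomputable def tFlow (n : ℕ) (s : ℂ) (t : ℕ → ℂ) (k : ℕ) : ℂ :=
  exp (tWeight n k * s) * t k + if k = 1 then n * s else 0

section Weights

variable {n : ℕ}

theorem sum_zWeight (hev : Even n) : ∑ k ∈ Icc 1 n, zWeight n k = 0 := by
  rcases Nat.eq_zero_or_pos n with rfl | hn
  · simp
  have hcard : #{k ∈ Icc 1 n | Even k} = n / 2 := by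
    simpa [even_iff_two_dvd, ← Icc_add_one_left_eq_Ioc]
      using Nat.Ioc_filter_dvd_card_eq_div n 2
  simp only [zWeight]
  rw [sum_congr rfl fun k hk => if_pos hk, sum_sub_distrib, sum_boole, hcard, sum_ite_eq',
    if_pos (by simpa using Nat.one_le_iff_ne_zero.mpr hn.ne'),
    Nat.cast_div (even_iff_two_dvd.mp hev) (by norm_num), Nat.cast_ofNat, sub_self]

theorem zWeight_add_zWeight_succ {i : ℕ} (hi : 2 ≤ i) (hin : i + 1 ≤ n) :
    zWeight n i + zWeight n (i + 1) = 1 := by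
  rcases Nat.even_or_odd i with h | h <;>
    simp [zWeight, h, Nat.even_add_one, hin, show i ≠ 1 by omega, show i ≤ n by omega,
      show i ≠ 0 by omega]

theorem tWeight_of_le {k : ℕ} (hk : k ≤ n) : tWeight n k = 1 - k := by
  simp [tWeight, hk]

end Weights

section Flow

variable {n : ℕ} (s : ℂ) (z t : ℕ → ℂ)

theorem tFlow_one (hn : n ≠ 0) : tFlow n s t 1 = t 1 + n * s := by
  simp [tFlow, tWeight, Nat.one_le_iff_ne_zero.mpr hn]

theorem tFlow_of_ne_one {k : ℕ} (hk : k ≠ 1) : tFlow n s t k = exp (tWeight n k * s) * t k := by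
  simp [tFlow, hk]

theorem hasDerivAt_zFlow (k : ℕ) :
    HasDerivAt (fun s => zFlow n s z k) (zWeight n k * z k) 0 := by
  simpa [zFlow] using (((hasDerivAt_id (0 : ℂ)).const_mul (zWeight n k)).cexp).mul_const (z k)

theorem hasDerivAt_tFlow (k : ℕ) :
    HasDerivAt (fun s => tFlow n s t k) (tWeight n k * t k + if k = 1 then (n : ℂ) else 0) 0 := by
  have hexp := (((hasDerivAt_id (0 : ℂ)).const_mul (tWeight n k)).cexp).mul_const (t k)
  split_ifs
  · simpa [tFlow, *] using hexp.fun_add ((hasDerivAt_id (0 : ℂ)).const_mul (n : ℂ))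
  · simpa [tFlow, *] using hexp

theorem zFlow_of_notMem {k : ℕ} (hk : k ∉ Icc 1 n) : zFlow n s z k = z k := by
  simp [zFlow, zWeight, hk]

theorem tFlow_of_notMem {k : ℕ} (hk : k ∉ range (n + 2)) : tFlow n s t k = t k := by
  simp only [mem_range] at hk
  simp [tFlow, tWeight, show ¬k ≤ n by omega, show k ≠ n + 1 by omega, show k ≠ 1 by omega]

theorem prod_zFlow (hev : Even n) : ∏ k ∈ Icc 1 n, zFlow n s z k = ∏ k ∈ Icc 1 n, z k := by
  simp only [zFlow, prod_mul_distrib, ← exp_sum, ← sum_mul, sum_zWeight hev, zero_mul, exp_zero,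
    one_mul]

theorem W0t_flow (hn : 2 ≤ n) (hev : Even n) :
    W0t n (zFlow n s z) (tFlow n s t) = exp s * W0t n z t := by
  have hpair (i : ℕ) (hi : i ∈ Icc 2 (n - 1)) :
      zFlow n s z i * zFlow n s z (i + 1) = exp s * (z i * z (i + 1)) := by
    obtain ⟨hi2, hin⟩ := mem_Icc.mp hi
    have hs : exp s = exp (zWeight n i * s) * exp (zWeight n (i + 1) * s) := by
      rw [← exp_add, ← add_mul, zWeight_add_zWeight_succ hi2 (by omega), one_mul]
    rw [zFlow, zFlow, hs]
    ring
  have hq : exp (t 1 + n * s) * exp (-(n / 2) * s) ^ 2 = exp (t 1) := by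
    rw [← exp_nat_mul, ← exp_add]; congr 1; push_cast; ring
  have hw1 : zWeight n 1 = -(n / 2) := by simp [zWeight, show 1 ≤ n by omega]
  have hw2 : zWeight n 2 = 1 := by simp [zWeight, hn]
  have hwn : zWeight n n = 1 := by simp [zWeight, hev, show n ≠ 1 by omega, show 1 ≤ n by omega]
  simp only [W0t, prod_zFlow s z hev, sum_congr rfl hpair, ← mul_sum,
    tFlow_one s t (by omega : n ≠ 0)]
  simp only [zFlow, hw1, hw2, hwn, one_mul]
  linear_combination (exp s * z 1 ^ 2 * z n / (∏ k ∈ Icc 1 n, z k - 1)) * hq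

theorem Wunf_flow (hn : 2 ≤ n) (hev : Even n) :
    Wunf n (zFlow n s z) (tFlow n s t) = exp s * Wunf n z t := by
  have hterm (i : ℕ) (hi : i ∈ Icc 2 n) :
      tFlow n s t i * (exp s * W0t n z t) ^ i = exp s * (t i * W0t n z t ^ i) := by
    obtain ⟨hi2, hin⟩ := mem_Icc.mp hi
    have hs : exp (tWeight n i * s) * exp s ^ i = exp s := by
      rw [tWeight_of_le hin, ← exp_nat_mul, ← exp_add]; congr 1; ring
    rw [tFlow_of_ne_one s t (by omega), mul_pow]
    linear_combination t i * W0t n z t ^ i * hs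
  have hn1 : exp (t 1 + n * s) * exp (tWeight n n * s) = exp s * exp (t 1) := by
    rw [tWeight_of_le le_rfl, ← exp_add, ← exp_add]; congr 1; ring
  have hlast : exp (tWeight n (n + 1) * s) * exp (t 1 + n * s) * exp (zWeight n 1 * s)
      = exp s * exp (t 1) := by
    simp only [tWeight, zWeight, ← exp_add]
    congr 1
    simp [show 1 ≤ n by omega]
    ring
  simp only [Wunf, W0t_flow s z t hn hev, sum_congr rfl hterm, ← mul_sum,
    tFlow_one s t (by omega : n ≠ 0), tFlow_of_ne_one s t (by omega : 0 ≠ 1),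
    tFlow_of_ne_one s t (by omega : n ≠ 1), tFlow_of_ne_one s t (by omega : n + 1 ≠ 1),
    tWeight_of_le (Nat.zero_le n), Nat.cast_zero, sub_zero, one_mul, zFlow]
  linear_combination (-2 * t n) * hn1 + t (n + 1) * z 1 * hlast

end Flow

theorem sum_weight_mul_deriv_Wunf {n : ℕ} (hn : 2 ≤ n) (hev : Even n) (z t : ℕ → ℂ)
    (hz : (∏ i ∈ Icc 1 n, z i) ≠ 1) :
    ∑ k ∈ Icc 1 n, zWeight n k * z k * deriv (fun a => Wunf n (update z k a) t) (z k)
      + ∑ k ∈ range (n + 2), (tWeight n k * t k + if k = 1 then (n : ℂ) else 0)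
          * deriv (fun a => Wunf n z (update t k a)) (t k)
      = Wunf n z t := by
  let S := (Icc 1 n).disjSum (range (n + 2))
  have hF : DifferentiableAt ℂ
      (fun u : S → ℂ => Wunf n (fun k => extend Subtype.val u (Sum.elim z t) (.inl k))
        (fun k => extend Subtype.val u (Sum.elim z t) (.inr k))) (fun i => Sum.elim z t i) := by
    have hden : ∏ i ∈ Icc 1 n,
        extend Subtype.val (fun i : S => Sum.elim z t i) (Sum.elim z t) (.inl i) - 1 ≠ 0 := by
      simpa [extend_val_restrict S (y := Sum.elim z t) fun _ _ => rfl, sub_eq_zero] using hz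
    unfold Wunf W0t
    fun_prop (disch := exact hden)
  have key := sum_mul_deriv_update_eq_self_of_flow S (x := Sum.elim z t)
    (F := fun X => Wunf n (fun k => X (.inl k)) (fun k => X (.inr k))) hF
    (v := Sum.elim (fun k => zWeight n k * z k)
      (fun k => tWeight n k * t k + if k = 1 then (n : ℂ) else 0))
    (γ := fun s => Sum.elim (zFlow n s z) (tFlow n s t))
    (fun i _ => by cases i <;> simp [hasDerivAt_zFlow, hasDerivAt_tFlow])
    (by ext (k | k) <;> simp [zFlow, tFlow])
    (fun s i hi => by cases i <;> simp_all [S, zFlow_of_notMem, tFlow_of_notMem])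
    (fun s => Wunf_flow s z t hn hev)
  simpa [S, sum_disjSum] using key

theorem filter_even_Icc_one (n : ℕ) : {k ∈ Icc 1 n | Even k} = (Icc 1 (n / 2)).image (2 * ·) := by
  ext k
  simp only [mem_filter, mem_Icc, mem_image, even_iff_exists_two_mul]
  constructor
  · rintro ⟨hk, i, rfl⟩
    exact ⟨i, by omega, rfl⟩
  · rintro ⟨i, hi, rfl⟩
    exact ⟨by omega, i, rfl⟩

theorem sum_zWeight_mul {n : ℕ} (hn : 1 ≤ n) (z D : ℕ → ℂ) :
    ∑ k ∈ Icc 1 n, zWeight n k * z k * D k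
      = ∑ i ∈ Icc 1 (n / 2), z (2 * i) * D (2 * i) - n / 2 * z 1 * D 1 := by
  have hterm (k : ℕ) (hk : k ∈ Icc 1 n) : zWeight n k * z k * D k
      = (if Even k then z k * D k else 0) - if k = 1 then n / 2 * z 1 * D 1 else 0 := by
    rw [zWeight, if_pos hk]
    split_ifs <;> simp_all
  rw [sum_congr rfl hterm, sum_sub_distrib, ← sum_filter, filter_even_Icc_one,
    sum_image (by simp), sum_ite_eq', if_pos (by simpa using hn)]

theorem sum_tWeight_mul (n : ℕ) (t D : ℕ → ℂ) :
    ∑ k ∈ range (n + 2), (tWeight n k * t k + if k = 1 then (n : ℂ) else 0) * D k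
      = n * D 1 + ∑ k ∈ range (n + 1), (1 - (k : ℂ)) * t k * D k
        + (1 - (n : ℂ) / 2) * t (n + 1) * D (n + 1) := by
  have hlast : tWeight n (n + 1) = 1 - (n : ℂ) / 2 := by simp [tWeight]
  simp only [add_mul, sum_add_distrib, ite_mul, zero_mul, sum_ite_eq', mem_range,
    show 1 < n + 2 by omega, if_true]
  rw [sum_range_succ, sum_congr rfl fun k hk => by
    rw [tWeight_of_le (Nat.lt_succ_iff.mp (mem_range.mp hk))], hlast]
  ring

/-- **The lifted Euler field satisfies `Ẽ(W) = W`** (§3.2).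
For even `n ≥ 4`, on the open set `{z₁⋯z_n ≠ 1}`, the first-order differential operator
`Ẽ = n ∂_{t₁} + ∑_{i=0}^{n} (1−i) t_i ∂_{t_i} + (1 − n/2) t_{n+1} ∂_{t_{n+1}}
  − (n/2) z₁ ∂_{z₁} + ∑_{i=1}^{n/2} z_{2i} ∂_{z_{2i}}`
applied to the universal unfolding `W` gives back `W`. -/
theorem euler_field_lift_of_universal_unfolding (n : ℕ) (hn : 4 ≤ n) (hev : Even n)
    (z t : ℕ → ℂ) (hz : (∏ i ∈ Finset.Icc 1 n, z i) ≠ 1) :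
    (n : ℂ) * deriv (fun s => Wunf n z (Function.update t 1 s)) (t 1)
      + (∑ i ∈ Finset.range (n + 1),
          (1 - (i : ℂ)) * t i * deriv (fun s => Wunf n z (Function.update t i s)) (t i))
      + (1 - (n : ℂ) / 2) * t (n + 1)
          * deriv (fun s => Wunf n z (Function.update t (n + 1) s)) (t (n + 1))
      - (n : ℂ) / 2 * z 1 * deriv (fun s => Wunf n (Function.update z 1 s) t) (z 1)
      + (∑ i ∈ Finset.Icc 1 (n / 2),
          z (2 * i) * deriv (fun s => Wunf n (Function.update z (2 * i) s) t) (z (2 * i)))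
      = Wunf n z t := by
  have key := sum_weight_mul_deriv_Wunf (by omega) hev z t hz
  rw [sum_zWeight_mul (by omega), sum_tWeight_mul] at key
  rw [← key]
  ring
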